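/- Let β ∈ [0, 2/√3]. Then for all integers k_1, k_2 ≥ 1 one has 0 ≤ Im ω_{k_1 k_2} ≤ β/2. -/
import Mathlib


open Real

/-- The real (signed) cube root. -/
noncomputable def cbrt (x : ℝ) : ℝ := Real.sign x * |x| ^ ((1 : ℝ) / 3)

/-- `s = √(k₁² + k₂²)`. -/
noncomputable def sNorm (k₁ k₂ : ℕ) : ℝ := Real.sqrt ((k₁ : ℝ) ^ 2 + (k₂ : ℝ) ^ 2)

/-- `Ψ_{k₁k₂}(β) = (3√3/8)·β³/s³`. -/
noncomputable def Psi (β : ℝ) (k₁ k₂ : ℕ) : ℝ :=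
  (3 * Real.sqrt 3 / 8) * β ^ 3 / (sNorm k₁ k₂) ^ 3

/-- `Φ_{k₁k₂}(β) = √(1 − (9/4)β²/s² + (27/16)β⁴/s⁴)`. -/
noncomputable def Phi (β : ℝ) (k₁ k₂ : ℕ) : ℝ :=
  Real.sqrt (1 - (9 / 4) * β ^ 2 / (sNorm k₁ k₂) ^ 2 + (27 / 16) * β ^ 4 / (sNorm k₁ k₂) ^ 4)

/-- `Λ⁺_{k₁k₂}(β) = (1/2)·∛(Φ + Ψ)`. -/
noncomputable def LamP (β : ℝ) (k₁ k₂ : ℕ) : ℝ := (1 / 2) * cbrt (Phi β k₁ k₂ + Psi β k₁ k₂)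

/-- `Λ⁻_{k₁k₂}(β) = (1/2)·∛(Φ − Ψ)`. -/
noncomputable def LamM (β : ℝ) (k₁ k₂ : ℕ) : ℝ := (1 / 2) * cbrt (Phi β k₁ k₂ - Psi β k₁ k₂)

/-- `Re ω_{k₁k₂} = s·(Λ⁺ + Λ⁻)`. -/
noncomputable def ReOmega (β : ℝ) (k₁ k₂ : ℕ) : ℝ := sNorm k₁ k₂ * (LamP β k₁ k₂ + LamM β k₁ k₂)

/-- `Im ω_{k₁k₂} = (1/√3)·s·(Λ⁻ − Λ⁺) + β/2`. -/
noncomputable def ImOmega (β : ℝ) (k₁ k₂ : ℕ) : ℝ :=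
  (1 / Real.sqrt 3) * sNorm k₁ k₂ * (LamM β k₁ k₂ - LamP β k₁ k₂) + β / 2

/-- The gap constant `γ(β)`. -/
noncomputable def gam (β : ℝ) : ℝ :=
  ((Real.sqrt 2 - 1) / 2) *
    (cbrt (Real.sqrt (1 - (9 / 8) * β ^ 2 + (27 / 64) * β ^ 4)
        + (3 * Real.sqrt 3 / (16 * Real.sqrt 2)) * β ^ 3)
      + cbrt (Real.sqrt (1 - (9 / 8) * β ^ 2 + (27 / 64) * β ^ 4)
        - (3 * Real.sqrt 3 / (16 * Real.sqrt 2)) * β ^ 3))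


private lemma cbrt_of_nonneg {x : ℝ} (h : 0 ≤ x) : cbrt x = x ^ ((1 : ℝ) / 3) := by
  rcases h.eq_or_lt with h' | h'
  · simp [cbrt, ← h']
  · simp [cbrt, Real.sign_of_pos h', abs_of_pos h']

private lemma rpow_third_cube {x : ℝ} (h : 0 ≤ x) : (x ^ ((1 : ℝ) / 3)) ^ 3 = x := by
  rw [← Real.rpow_natCast (x ^ ((1 : ℝ) / 3)) 3, ← Real.rpow_mul h]
  norm_num

private lemma cube_rpow_third {y : ℝ} (h : 0 ≤ y) : ((y ^ 3 : ℝ)) ^ ((1 : ℝ) / 3) = y := by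
  rw [← Real.rpow_natCast y 3, ← Real.rpow_mul h]
  norm_num

set_option maxHeartbeats 800000 in
/-- `0 ≤ Im ω_{k₁k₂} ≤ β/2` when `β ∈ [0, 2/√3]`. -/
theorem stmt_3 (β : ℝ) (hβ0 : 0 ≤ β) (hβ : β ≤ 2 / Real.sqrt 3) :
    ∀ k₁ k₂ : ℕ, 1 ≤ k₁ → 1 ≤ k₂ →
      0 ≤ ImOmega β k₁ k₂ ∧ ImOmega β k₁ k₂ ≤ β / 2 := by
  intro k₁ k₂ hk₁ hk₂
  have h3 : Real.sqrt 3 ^ 2 = 3 := Real.sq_sqrt (by norm_num)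
  have h3pos : (0:ℝ) < Real.sqrt 3 := Real.sqrt_pos.mpr (by norm_num)
  set s : ℝ := sNorm k₁ k₂ with hs_def
  have hs1 : 1 ≤ s := by
    rw [hs_def, sNorm, show (1:ℝ) = Real.sqrt 1 by simp]
    apply Real.sqrt_le_sqrt
    have h1 : (1:ℝ) ≤ (k₁:ℝ) := by exact_mod_cast hk₁
    have h2 : (1:ℝ) ≤ (k₂:ℝ) := by exact_mod_cast hk₂
    nlinarith
  have hs0 : 0 < s := lt_of_lt_of_le one_pos hs1
  obtain ⟨t, ht0, hst⟩ : ∃ t : ℝ, 0 ≤ t ∧ Real.sqrt 3 * β = 2 * s * t :=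
    ⟨Real.sqrt 3 * β / (2 * s), by positivity, by field_simp⟩
  have ht1 : t ≤ 1 := by
    have hsb : Real.sqrt 3 * β ≤ 2 := by
      rw [div_eq_mul_inv] at hβ
      calc Real.sqrt 3 * β ≤ Real.sqrt 3 * (2 * (Real.sqrt 3)⁻¹) := by nlinarith
        _ = 2 := by field_simp
    nlinarith
  have hb2 : 3 * β ^ 2 = 4 * s ^ 2 * t ^ 2 := by
    linear_combination (Real.sqrt 3 * β + 2 * s * t) * hst - β ^ 2 * h3
  have hPsi : Psi β k₁ k₂ = t ^ 3 := by
    rw [Psi, ← hs_def, div_eq_iff (by positivity : (s:ℝ) ^ 3 ≠ 0)]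
    linear_combination (Real.sqrt 3 ^ 2 * β ^ 2 / 8 + Real.sqrt 3 * β * s * t / 4
        + s ^ 2 * t ^ 2 / 2) * hst - Real.sqrt 3 * β ^ 3 / 8 * h3
  have hinner : 1 - (9 / 4) * β ^ 2 / s ^ 2 + (27 / 16) * β ^ 4 / s ^ 4
      = 1 - 3 * t ^ 2 + 3 * t ^ 4 := by
    have e1 : (9 / 4) * β ^ 2 / s ^ 2 = 3 * t ^ 2 := by
      rw [div_eq_iff (by positivity : (s:ℝ) ^ 2 ≠ 0)]
      linear_combination (3 / 4) * hb2
    have e2 : (27 / 16) * β ^ 4 / s ^ 4 = 3 * t ^ 4 := by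
      rw [div_eq_iff (by positivity : (s:ℝ) ^ 4 ≠ 0)]
      linear_combination (3 / 16) * (3 * β ^ 2 + 4 * s ^ 2 * t ^ 2) * hb2
    rw [e1, e2]
  have hinn0 : 0 ≤ 1 - 3 * t ^ 2 + 3 * t ^ 4 := by nlinarith [sq_nonneg (t ^ 2 - 1 / 2)]
  have hPhi : Phi β k₁ k₂ = Real.sqrt (1 - 3 * t ^ 2 + 3 * t ^ 4) := by
    rw [Phi, ← hs_def, hinner]
  set Φ : ℝ := Real.sqrt (1 - 3 * t ^ 2 + 3 * t ^ 4) with hΦ_def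
  have hΦ0 : 0 ≤ Φ := Real.sqrt_nonneg _
  have hΦsq : Φ ^ 2 = 1 - 3 * t ^ 2 + 3 * t ^ 4 := Real.sq_sqrt hinn0
  have ht3 : 0 ≤ t ^ 3 := by positivity
  have hΦt : t ^ 3 ≤ Φ := by
    have h6 : (t ^ 3) ^ 2 ≤ 1 - 3 * t ^ 2 + 3 * t ^ 4 := by
      have hc : 0 ≤ (1 - t ^ 2) ^ 3 := pow_nonneg (by nlinarith) 3
      nlinarith [hc]
    calc t ^ 3 = Real.sqrt ((t ^ 3) ^ 2) := (Real.sqrt_sq ht3).symm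
      _ ≤ Φ := Real.sqrt_le_sqrt h6
  have hP0 : 0 ≤ Φ + t ^ 3 := by positivity
  have hM0 : 0 ≤ Φ - t ^ 3 := by linarith
  set a : ℝ := (Φ + t ^ 3) ^ ((1:ℝ)/3) with ha_def
  set b : ℝ := (Φ - t ^ 3) ^ ((1:ℝ)/3) with hb_def
  have ha0 : 0 ≤ a := Real.rpow_nonneg hP0 _
  have hb0 : 0 ≤ b := Real.rpow_nonneg hM0 _
  have ha3 : a ^ 3 = Φ + t ^ 3 := rpow_third_cube hP0
  have hb3 : b ^ 3 = Φ - t ^ 3 := rpow_third_cube hM0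
  have hba : b ≤ a := Real.rpow_le_rpow hM0 (by linarith) (by norm_num)
  have hab : a * b = 1 - t ^ 2 := by
    have ht2 : 0 ≤ 1 - t ^ 2 := by nlinarith
    rw [ha_def, hb_def, ← Real.mul_rpow hP0 hM0,
      show (Φ + t ^ 3) * (Φ - t ^ 3) = (1 - t ^ 2) ^ 3 by linear_combination hΦsq,
      cube_rpow_third ht2]
  have hident : (a - b) ^ 3 + 3 * (1 - t ^ 2) * (a - b) = 2 * t ^ 3 := by
    linear_combination ha3 - hb3 - 3 * (a - b) * hab
  have hd2t : a - b ≤ 2 * t := by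
    nlinarith [sq_nonneg (a - b + t), ht0, sub_nonneg.mpr hba,
      mul_nonneg (sub_nonneg.mpr hba) (sq_nonneg (a - b + t))]
  have hLamP : LamP β k₁ k₂ = a / 2 := by
    rw [LamP, hPsi, hPhi, cbrt_of_nonneg hP0, ← ha_def]; ring
  have hLamM : LamM β k₁ k₂ = b / 2 := by
    rw [LamM, hPsi, hPhi, cbrt_of_nonneg hM0, ← hb_def]; ring
  have hIm : ImOmega β k₁ k₂ = (1 / Real.sqrt 3) * s * ((b - a) / 2) + β / 2 := by
    rw [ImOmega, hLamP, hLamM, ← hs_def]; ring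
  have h3ne : Real.sqrt 3 ≠ 0 := ne_of_gt h3pos
  constructor
  · rw [hIm]
    have key : s * (a - b) ≤ Real.sqrt 3 * β := by
      rw [hst]; nlinarith
    have h1 : (1 / Real.sqrt 3) * (s * (a - b)) ≤ (1 / Real.sqrt 3) * (Real.sqrt 3 * β) :=
      mul_le_mul_of_nonneg_left key (by positivity)
    have h2 : (1 / Real.sqrt 3) * (Real.sqrt 3 * β) = β := by field_simp
    nlinarith [h1, h2]
  · rw [hIm]
    have hnn : (1 / Real.sqrt 3) * s * ((b - a) / 2) ≤ 0 :=
      mul_nonpos_of_nonneg_of_nonpos (by positivity) (by linarith)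
    linarith
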